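/- Mixed-term defect bound (from the proof of Proposition 2.1): With u_i := a^{(1)}_i ⊗ ⋯ ⊗ a^{(n)}_i, for every 1 ≤ i < j ≤ m one has ‖u_i u_j + u_j u_i‖ ≤ φ^{(n)}_{ij}. -/

import Mathlib

/-!
Entrywise, `uᵢuⱼ + uⱼuᵢ` is `∏ᵣ pᵣ + ∏ᵣ qᵣ`, with `pᵣ`, `qᵣ` the entries of `aᵢ⁽ʳ⁾aⱼ⁽ʳ⁾` and
`aⱼ⁽ʳ⁾aᵢ⁽ʳ⁾`. Expanding `∏ 2p = ∏ ((p - q) + (p + q))` and `∏ 2q = ∏ (-(p - q) + (p + q))` over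
subsets `S` of sites, the terms with `|S|` odd cancel in the sum, which leaves
`uᵢuⱼ + uⱼuᵢ = 2^(1-n) ∑_{|S| even} ⊗ᵣ (commutator for r ∈ S, anticommutator otherwise)`.
The triangle inequality and `‖⊗ᵣ bᵣ‖ ≤ ∏ᵣ ‖bᵣ‖` finish the proof.
-/

open scoped BigOperators ComplexOrder

namespace Parity

variable {n : ℕ} {d : Fin n → ℕ}

/-- Kronecker product of `n` matrices, as a matrix over the product index set. -/
def kron (a : ∀ r : Fin n, Matrix (Fin (d r)) (Fin (d r)) ℂ) :
    Matrix (∀ r, Fin (d r)) (∀ r, Fin (d r)) ℂ :=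
  fun i j => ∏ r, a r (i r) (j r)

/-- The ℓ²-operator norm of a complex matrix. -/
noncomputable def opNorm {I : Type*} [Fintype I] [DecidableEq I] (A : Matrix I I ℂ) : ℝ :=
  ‖Matrix.toEuclideanCLM (𝕜 := ℂ) A‖

/-- The defect weight φ⁽ⁿ⁾ᵢⱼ. -/
noncomputable def phi {m : ℕ} (a : ∀ r : Fin n, Fin m → Matrix (Fin (d r)) (Fin (d r)) ℂ)
    (i j : Fin m) : ℝ :=
  (2 : ℝ) ^ ((1 : ℤ) - n) *
    ∑ S ∈ Finset.univ.filter (fun S : Finset (Fin n) => Even S.card),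
      (∏ r ∈ S, opNorm (a r i * a r j - a r j * a r i)) *
        (∏ r ∈ Sᶜ, opNorm (a r i * a r j + a r j * a r i))

/-- A state: positive semidefinite with trace one. -/
def IsState {I : Type*} [Fintype I] (ρ : Matrix I I ℂ) : Prop :=
  ρ.PosSemidef ∧ ρ.trace = 1

/-- The square root of a positive semidefinite matrix, as the removed `Matrix.PosSemidef.sqrt`. -/
noncomputable def psdSqrt {I : Type*} [Fintype I] [DecidableEq I] {A : Matrix I I ℂ}
    (hA : A.PosSemidef) : Matrix I I ℂ :=
  (hA.1.eigenvectorUnitary : Matrix I I ℂ) *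
    Matrix.diagonal ((↑) ∘ (√·) ∘ hA.1.eigenvalues) *
    (star hA.1.eigenvectorUnitary : Matrix I I ℂ)

/-- The trace norm `Tr √(AᴴA)`. -/
noncomputable def traceNorm {I : Type*} [Fintype I] [DecidableEq I] (A : Matrix I I ℂ) : ℝ :=
  ((psdSqrt (Matrix.posSemidef_conjTranspose_mul_self A)).trace).re

/-- Logarithm of a Hermitian matrix via the functional calculus (junk value otherwise);
an eigenvalue `0` contributes `Real.log 0 = 0`. -/
noncomputable def mlog {I : Type*} [Fintype I] [DecidableEq I] (A : Matrix I I ℂ) :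
    Matrix I I ℂ :=
  if hA : A.IsHermitian then
    (hA.eigenvectorUnitary : Matrix I I ℂ) *
      Matrix.diagonal (fun i => (Real.log (hA.eigenvalues i) : ℂ)) *
      (star hA.eigenvectorUnitary : Matrix I I ℂ)
  else 0

/-- Quantum relative entropy `D(ρ‖σ) = Tr(ρ (log ρ − log σ))` (natural logarithm). -/
noncomputable def relEntropy {I : Type*} [Fintype I] [DecidableEq I] (ρ σ : Matrix I I ℂ) : ℝ :=
  (Matrix.trace (ρ * (mlog ρ - mlog σ))).re

/-- The `r`-th marginal (partial trace over all other factors). -/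
noncomputable def marginal (ρ : Matrix (∀ r, Fin (d r)) (∀ r, Fin (d r)) ℂ) (r : Fin n) :
    Matrix (Fin (d r)) (Fin (d r)) ℂ :=
  fun a b => ∑ k : ∀ s, Fin (d s), if k r = a then ρ k (Function.update k r b) else 0

/-- Total correlation `I_tot(ρ) = D(ρ‖ρ₁ ⊗ ⋯ ⊗ ρₙ)`. -/
noncomputable def Itot (ρ : Matrix (∀ r, Fin (d r)) (∀ r, Fin (d r)) ℂ) : ℝ :=
  relEntropy ρ (kron (fun r => marginal ρ r))

/-- The set of product states. -/
def ProdStates (d : Fin n → ℕ) : Set (Matrix (∀ r, Fin (d r)) (∀ r, Fin (d r)) ℂ) :=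
  {σ | ∃ s : ∀ r : Fin n, Matrix (Fin (d r)) (Fin (d r)) ℂ,
    (∀ r, IsState (s r)) ∧ σ = kron s}

/-- The product threshold `Γ_prod(B)`. -/
noncomputable def Gamma (d : Fin n → ℕ) (B : Matrix (∀ r, Fin (d r)) (∀ r, Fin (d r)) ℂ) : ℝ :=
  sSup {x : ℝ | ∃ σ ∈ ProdStates d, x = (Matrix.trace (σ * B)).re}

/-- The excess `Δ_B(ρ)`. -/
noncomputable def excess (d : Fin n → ℕ) (B ρ : Matrix (∀ r, Fin (d r)) (∀ r, Fin (d r)) ℂ) : ℝ :=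
  max ((Matrix.trace (ρ * B)).re - Gamma d B) 0

end Parity

open Finset Matrix
open scoped Matrix.Norms.L2Operator

theorem Fintype.two_pow_card_mul_prod_add_prod {ι R : Type*} [Fintype ι] [DecidableEq ι]
    [CommRing R] (p q : ι → R) :
    2 ^ Fintype.card ι * (∏ i, p i + ∏ i, q i) =
      2 * ∑ S ∈ univ.filter (fun S : Finset ι => Even S.card),
        ∏ i, S.piecewise (p - q) (p + q) i := by
  set T : Finset ι → R := fun S => (∏ i ∈ S, (p - q) i) * ∏ i ∈ Sᶜ, (p + q) i
  have hp : 2 ^ Fintype.card ι * ∏ i, p i = ∑ S, T S := by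
    rw [← Fintype.prod_add, ← card_univ, ← prod_const, ← prod_mul_distrib]
    refine Finset.prod_congr rfl fun i _ => ?_
    simp only [Pi.sub_apply, Pi.add_apply]
    ring
  have hq : 2 ^ Fintype.card ι * ∏ i, q i = ∑ S, (-1) ^ S.card * T S := by
    simp only [T, ← mul_assoc, ← prod_neg]
    rw [← Fintype.prod_add, ← card_univ, ← prod_const, ← prod_mul_distrib]
    refine Finset.prod_congr rfl fun i _ => ?_
    simp only [Pi.sub_apply, Pi.add_apply]
    ring
  rw [mul_add, hp, hq, ← sum_add_distrib, sum_filter, mul_sum]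
  refine Finset.sum_congr rfl fun S _ => ?_
  rw [prod_piecewise, univ_inter, ← compl_eq_univ_sdiff]
  rcases Nat.even_or_odd S.card with hS | hS
  · rw [if_pos hS, hS.neg_one_pow]
    ring
  · rw [if_neg (Nat.not_even_iff_odd.mpr hS), hS.neg_one_pow]
    ring

theorem Matrix.l2_opNorm_one_le {I : Type*} [Fintype I] [DecidableEq I] :
    ‖(1 : Matrix I I ℂ)‖ ≤ 1 := by
  rw [cstar_norm_def, map_one]
  exact ContinuousLinearMap.norm_id_le

namespace Parity

variable {n : ℕ} {d : Fin n → ℕ}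

theorem opNorm_eq_norm {I : Type*} [Fintype I] [DecidableEq I] (A : Matrix I I ℂ) :
    opNorm A = ‖A‖ := rfl

theorem kron_mul (a b : ∀ r, Matrix (Fin (d r)) (Fin (d r)) ℂ) :
    kron a * kron b = kron (a * b) := by
  ext P Q
  simp only [mul_apply, kron, Pi.mul_apply, Fintype.prod_sum, prod_mul_distrib]

theorem kron_one : kron (1 : ∀ r, Matrix (Fin (d r)) (Fin (d r)) ℂ) = 1 := by
  ext P Q
  simp [kron, one_apply, prod_ite_zero, funext_iff]

theorem conjTranspose_kron (a : ∀ r, Matrix (Fin (d r)) (Fin (d r)) ℂ) :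
    (kron a)ᴴ = kron (star a) := by
  ext P Q
  simp [kron, conjTranspose_apply, star_prod]

theorem kron_update_apply (a : ∀ r, Matrix (Fin (d r)) (Fin (d r)) ℂ) (r : Fin n)
    (x : Matrix (Fin (d r)) (Fin (d r)) ℂ) (P Q : ∀ r, Fin (d r)) :
    kron (Function.update a r x) P Q = x (P r) (Q r) * ∏ s ∈ univ.erase r, a s (P s) (Q s) := by
  rw [kron, ← mul_prod_erase univ _ (mem_univ r), Function.update_self]
  congr 1
  exact prod_congr rfl fun s hs => by rw [Function.update_of_ne (ne_of_mem_erase hs)]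

theorem kron_add_kron (x y : ∀ r, Matrix (Fin (d r)) (Fin (d r)) ℂ) :
    kron x + kron y =
      (2 : ℂ) ^ ((1 : ℤ) - n) • ∑ S ∈ univ.filter (fun S : Finset (Fin n) => Even S.card),
        kron (S.piecewise (x - y) (x + y)) := by
  ext P Q
  set p : Fin n → ℂ := fun r => x r (P r) (Q r)
  set q : Fin n → ℂ := fun r => y r (P r) (Q r)
  have hpw (S : Finset (Fin n)) (r : Fin n) :
      S.piecewise (x - y) (x + y) r (P r) (Q r) = S.piecewise (p - q) (p + q) r := by
    by_cases hr : r ∈ S <;> simp [hr, p, q]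
  have h := Fintype.two_pow_card_mul_prod_add_prod p q
  rw [Fintype.card_fin] at h
  simp only [Matrix.add_apply, Matrix.smul_apply, Matrix.sum_apply, kron, smul_eq_mul, hpw]
  rw [zpow_sub₀ two_ne_zero, zpow_one, zpow_natCast]
  field_simp
  linear_combination h

noncomputable def kronSingle (r : Fin n) :
    Matrix (Fin (d r)) (Fin (d r)) ℂ →⋆ₙₐ[ℂ] Matrix (∀ s, Fin (d s)) (∀ s, Fin (d s)) ℂ where
  toFun x := kron (Function.update 1 r x)
  map_smul' c x := by
    ext P Q
    simp only [kron_update_apply, Matrix.smul_apply, smul_eq_mul, mul_assoc, MonoidHom.id_apply]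
  map_zero' := by
    ext P Q
    simp only [kron_update_apply, Matrix.zero_apply, zero_mul]
  map_add' x y := by
    ext P Q
    simp only [kron_update_apply, Matrix.add_apply, add_mul]
  map_mul' x y := by
    simp only [kron_mul, ← Function.update_mul, mul_one]
  map_star' x := by
    simp only [conjTranspose_kron, star_eq_conjTranspose, ← Function.update_star, star_one]

theorem kronSingle_apply (r : Fin n) (x : Matrix (Fin (d r)) (Fin (d r)) ℂ) :
    kronSingle r x = kron (Function.update 1 r x) := rfl

/-- Each `kronSingle r` is a star homomorphism of C⋆-algebras, hence contractive; `kron b` is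
the product of the `kronSingle r (b r)`. -/
theorem norm_kron_le (b : ∀ r, Matrix (Fin (d r)) (Fin (d r)) ℂ) :
    ‖kron b‖ ≤ ∏ r, ‖b r‖ := by
  suffices h : ∀ s : Finset (Fin n), ‖kron (s.piecewise b 1)‖ ≤ ∏ r ∈ s, ‖b r‖ by
    simpa using h univ
  intro s
  induction s using Finset.induction_on with
  | empty => simpa [kron_one] using Matrix.l2_opNorm_one_le
  | insert r s hr ih =>
    have hsplit :
        kron ((insert r s).piecewise b 1) = kronSingle r (b r) * kron (s.piecewise b 1) := by
      rw [kronSingle_apply, kron_mul, piecewise_insert]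
      congr 1
      funext t
      by_cases ht : t = r
      · subst ht
        simp [hr]
      · simp [ht]
    rw [hsplit, prod_insert hr]
    exact (norm_mul_le _ _).trans <|
      mul_le_mul (NonUnitalStarAlgHom.norm_apply_le _ _) ih (norm_nonneg _) (norm_nonneg _)

end Parity

open Parity in
theorem mixed_term_defect_bound_general
    {n m : ℕ} {d : Fin n → ℕ}
    (a : ∀ r : Fin n, Fin m → Matrix (Fin (d r)) (Fin (d r)) ℂ)
    (i j : Fin m) :
    opNorm (kron (fun r => a r i) * kron (fun r => a r j) +
        kron (fun r => a r j) * kron (fun r => a r i)) ≤ phi a i j := by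
  set x : ∀ r, Matrix (Fin (d r)) (Fin (d r)) ℂ := (fun r => a r i) * (fun r => a r j)
  set y : ∀ r, Matrix (Fin (d r)) (Fin (d r)) ℂ := (fun r => a r j) * (fun r => a r i)
  have hnorm (S : Finset (Fin n)) : ∏ r, ‖S.piecewise (x - y) (x + y) r‖ =
      (∏ r ∈ S, opNorm (x r - y r)) * ∏ r ∈ Sᶜ, opNorm (x r + y r) := by
    rw [← prod_mul_prod_compl S]
    refine congrArg₂ (· * ·) (prod_congr rfl fun r hr => ?_) (prod_congr rfl fun r hr => ?_)
    · rw [piecewise_eq_of_mem _ _ _ hr, Pi.sub_apply, opNorm_eq_norm]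
    · rw [piecewise_eq_of_notMem _ _ _ (mem_compl.mp hr), Pi.add_apply, opNorm_eq_norm]
  rw [kron_mul, kron_mul, kron_add_kron, opNorm_eq_norm, norm_smul, norm_zpow, phi,
    RCLike.norm_ofNat]
  gcongr
  refine (norm_sum_le _ _).trans (sum_le_sum fun S _ => ?_)
  exact (norm_kron_le _).trans (hnorm S).le

open Parity in
/-- Mixed-term defect bound: `‖uᵢuⱼ + uⱼuᵢ‖ ≤ φ⁽ⁿ⁾ᵢⱼ`. -/
theorem mixed_term_defect_bound
    {n m : ℕ} {d : Fin n → ℕ} (hn : 1 ≤ n) (hd : ∀ r, 1 ≤ d r) (hm : 1 ≤ m)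
    (a : ∀ r : Fin n, Fin m → Matrix (Fin (d r)) (Fin (d r)) ℂ)
    (ha_sa : ∀ r i, (a r i).IsHermitian)
    (ha_norm : ∀ r i, opNorm (a r i) ≤ 1)
    (i j : Fin m) (hij : i < j) :
    opNorm (kron (fun r => a r i) * kron (fun r => a r j) +
        kron (fun r => a r j) * kron (fun r => a r i)) ≤ phi a i j :=
  mixed_term_defect_bound_general a i j
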